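/- Let n ∈ ℕ, N = 2^n, and let G be the n-fold Kronecker power over 𝔽₂ of the kernel [[1,0],[1,1]]. Suppose i, j ∈ {0,…,N−1} with i ≠ j satisfy popcount(i) = popcount(j) = ℓ ≥ 1 and i AND j = 0 (disjoint bit supports). Then for every T ⊆ {t ∈ {0,…,N−1} : popcount(t) ≥ ℓ+1}, i₁(g_i + g_j + Σ_{t∈T} g_t) ≥ i₁(g_i + g_j) = 2^{ℓ+1} − 2. -/

import Mathlib

open Finset

/-- The polar kernel `G₂ = [[1,0],[1,1]]` over `𝔽₂`. -/
def polarKernel : Matrix (Fin 2) (Fin 2) (ZMod 2) := !![1, 0; 1, 1]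

/-- The `n`-fold Kronecker power of the polar kernel, an `N × N` matrix over `𝔽₂`
with `N = 2 ^ n`, rows and columns indexed by `0, …, N-1`. -/
def polarG : (n : ℕ) → Matrix (Fin (2 ^ n)) (Fin (2 ^ n)) (ZMod 2)
  | 0 => 1
  | n + 1 =>
    Matrix.reindex (finCongr (by ring)) (finCongr (by ring))
      (Matrix.reindex finProdFinEquiv finProdFinEquiv
        (Matrix.kroneckerMap (· * ·) polarKernel (polarG n)))

/-- Row `g_t` of the polar matrix, as a vector in `𝔽₂^N`. -/
def row (n : ℕ) (t : Fin (2 ^ n)) : Fin (2 ^ n) → ZMod 2 := fun c => polarG n t c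

/-- Hamming weight `i₁(v)`: the number of nonzero coordinates of `v`. -/
def hammingWeight {N : ℕ} (v : Fin N → ZMod 2) : ℕ :=
  (Finset.univ.filter fun c => v c ≠ 0).card

/-- `popcount j`: the number of ones in the binary representation of `j`. -/
def popcount (j : ℕ) : ℕ := (Nat.bits j).count true

/-!
Read row and column indices as their sets of binary digits: then `g_t c = 1` iff `c ⊆ t`
(`polarG_apply`), so `g_i + g_j + ∑_{t ∈ T} g_t` is the function `w ↦ ∑_{u ∈ 𝒰} [w ⊆ u]` on
subsets of `{0, …, n-1}`, with `𝒰 = {A, B} ∪ 𝒯` for the bit sets `A`, `B` of `i`, `j` and `𝒯` of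
`T`, and its weight is the size of its support `S`.

Möbius inversion over `𝔽₂` gives `#{w ∈ S | c ⊆ w} ≡ [c ∈ 𝒰]`, hence
`#{w ∈ S | w ∩ A = a, u ⊆ w} ≡ #{c | a ⊆ c ⊆ A, c ∪ u ∈ 𝒰}` (mod 2). For `u = ∅` this makes every
fibre of `w ↦ w ∩ A` odd, since `A` is the only member of `𝒰` inside `A`; so `#S ≥ 2 ^ ℓ`, which
settles `ℓ = 1`. For `u = {y}` with `y ∈ B` and `ℓ ≥ 2`, it shows that a fibre `{w}` of size one has
`w ∩ B = {y ∈ B | A ∪ {y} ∈ 𝒯}`, the same set for every such fibre. Hence the `k_A` singleton fibres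
over `A` all lie in one fibre over `B`; as odd fibres have size `1` or at least `3`,
`#S ≥ k_A + 3 (2 ^ ℓ - 1) - 2 k_B`, and symmetrically. Adding the two and using `k_A, k_B ≤ 2 ^ ℓ`
gives `#S ≥ 2 ^ (ℓ + 1) - 3`, and `#S` is even because `∅ ∉ 𝒰`. For `T = ∅` the support is
`(𝒫 A ∪ 𝒫 B) \ {∅}`, of size exactly `2 ^ (ℓ + 1) - 2`.
-/

lemma mem_equivBitIndices {m k : ℕ} : k ∈ equivBitIndices m ↔ m.testBit k := by
  simp

lemma equivBitIndices_subset_iff {c t : ℕ} :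
    equivBitIndices c ⊆ equivBitIndices t ↔ ∀ k, c.testBit k → t.testBit k := by
  simp only [subset_iff, mem_equivBitIndices]

lemma equivBitIndices_subset_range_iff {m n : ℕ} :
    equivBitIndices m ⊆ range n ↔ m < 2 ^ n := by
  simp only [subset_iff, mem_equivBitIndices, mem_range]
  refine ⟨fun h => Nat.lt_pow_two_of_testBit m fun k hk => ?_, fun h k hk => ?_⟩
  · exact Bool.eq_false_iff.2 fun hbit => (h hbit).not_ge hk
  · exact (Nat.pow_lt_pow_iff_right (by norm_num)).1 ((Nat.ge_two_pow_of_testBit hk).trans_lt h)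

lemma popcount_eq_card_equivBitIndices (m : ℕ) : popcount m = #(equivBitIndices m) := by
  rw [equivBitIndices_apply, List.toFinset_card_of_nodup Nat.bitIndices_nodup]
  induction m using Nat.binaryRec with
  | zero => simp [popcount]
  | bit b m ih =>
    rcases eq_or_ne (Nat.bit b m) 0 with h | h
    · simp [h, popcount]
    rw [popcount, Nat.bits_append_bit m b fun hm => by subst hm; cases b <;> simp_all]
    cases b <;> simp [← ih, popcount]

lemma disjoint_equivBitIndices_iff {i j : ℕ} :
    Disjoint (equivBitIndices i) (equivBitIndices j) ↔ i &&& j = 0 := by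
  have : i &&& j = 0 ↔ ∀ k, (i &&& j).testBit k = false :=
    ⟨fun h k => h ▸ Nat.zero_testBit k, Nat.zero_of_testBit_eq_false⟩
  simp [this, disjoint_left]

lemma equivBitIndices_subset_iff_div_mod (n c t : ℕ) :
    equivBitIndices c ⊆ equivBitIndices t ↔
      equivBitIndices (c / 2 ^ n) ⊆ equivBitIndices (t / 2 ^ n) ∧
        equivBitIndices (c % 2 ^ n) ⊆ equivBitIndices (t % 2 ^ n) := by
  simp only [equivBitIndices_subset_iff, Nat.testBit_div_two_pow, Nat.testBit_mod_two_pow,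
    Bool.and_eq_true, decide_eq_true_eq]
  refine ⟨fun h => ⟨fun k => h _, fun k hk => ⟨hk.1, h k hk.2⟩⟩,
    fun ⟨hhi, hlo⟩ k hk => ?_⟩
  rcases lt_or_ge k n with hkn | hkn
  · exact (hlo k ⟨hkn, hk⟩).2
  · have hk' : c.testBit (k - n + n) := by rwa [Nat.sub_add_cancel hkn]
    simpa [Nat.sub_add_cancel hkn] using hhi (k - n) hk'

lemma polarKernel_apply (a b : Fin 2) :
    polarKernel a b = if equivBitIndices b ⊆ equivBitIndices a then 1 else 0 := by
  fin_cases a <;> fin_cases b <;> simp [polarKernel]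

lemma div_two_pow_lt_two {n : ℕ} (t : Fin (2 ^ (n + 1))) : (t : ℕ) / 2 ^ n < 2 := by
  rw [Nat.div_lt_iff_lt_mul (by positivity), ← pow_succ']
  exact t.isLt

lemma polarG_succ_apply (n : ℕ) (t c : Fin (2 ^ (n + 1))) :
    polarG (n + 1) t c =
      polarKernel ⟨t / 2 ^ n, div_two_pow_lt_two t⟩ ⟨c / 2 ^ n, div_two_pow_lt_two c⟩ *
        polarG n ⟨t % 2 ^ n, Nat.mod_lt _ (Nat.two_pow_pos n)⟩
          ⟨c % 2 ^ n, Nat.mod_lt _ (Nat.two_pow_pos n)⟩ := by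
  show polarKernel _ _ * polarG n _ _ = _
  congr 3

theorem polarG_apply (n : ℕ) (t c : Fin (2 ^ n)) :
    polarG n t c = if equivBitIndices c ⊆ equivBitIndices t then 1 else 0 := by
  induction n with
  | zero =>
    obtain rfl : t = c := Fin.ext (by have := t.isLt; have := c.isLt; omega)
    simp [polarG]
  | succ n ih =>
    rw [polarG_succ_apply, polarKernel_apply, ih, ite_zero_mul_ite_zero, mul_one]
    exact if_congr (equivBitIndices_subset_iff_div_mod n _ _).symm rfl rfl

section DownsetSum

variable {α : Type*} [DecidableEq α]

def downsetSum (𝒰 : Finset (Finset α)) (w : Finset α) : ZMod 2 :=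
  ∑ u ∈ 𝒰, if w ⊆ u then 1 else 0

def downsetSupport (N : Finset α) (𝒰 : Finset (Finset α)) : Finset (Finset α) :=
  {w ∈ N.powerset | downsetSum 𝒰 w ≠ 0}

lemma natCast_card_filter_ne_zero {ι : Type*} (s : Finset ι) (f : ι → ZMod 2) :
    (#{x ∈ s | f x ≠ 0} : ZMod 2) = ∑ x ∈ s, f x := by
  rw [← sum_filter_ne_zero, card_eq_sum_ones, Nat.cast_sum, Nat.cast_one]
  refine sum_congr rfl fun x hx => ?_
  obtain ⟨-, hx⟩ := mem_filter.1 hx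
  generalize f x = y at hx ⊢
  revert y
  decide

lemma natCast_card_Icc (s t : Finset α) : (#(Icc s t) : ZMod 2) = if s = t then 1 else 0 := by
  by_cases hst : s ⊆ t
  · rw [card_Icc_finset hst, Nat.cast_pow, Nat.cast_ofNat]
    rcases eq_or_ne s t with rfl | hne
    · simp
    · have : #s < #t := card_lt_card (ssubset_of_ne_of_subset hne hst)
      rw [if_neg hne, show (2 : ZMod 2) = 0 from rfl, zero_pow (by omega)]
  · rw [Icc_eq_empty (by simpa using hst)]
    simp [show s ≠ t by rintro rfl; exact hst subset_rfl]

lemma sum_Icc_downsetSum {N : Finset α} {𝒰 : Finset (Finset α)} (h𝒰 : 𝒰 ⊆ N.powerset)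
    (c : Finset α) : ∑ w ∈ Icc c N, downsetSum 𝒰 w = if c ∈ 𝒰 then 1 else 0 := by
  simp only [downsetSum]
  rw [sum_comm, ← sum_ite_eq 𝒰 c (fun _ => (1 : ZMod 2))]
  refine sum_congr rfl fun u hu => ?_
  have hIcc : {w ∈ Icc c N | w ⊆ u} = Icc c u := by
    ext w
    have := mem_powerset.1 (h𝒰 hu)
    simp only [mem_filter, mem_Icc]
    exact ⟨fun h => ⟨h.1.1, h.2⟩, fun h => ⟨⟨h.1, h.2.trans this⟩, h.2⟩⟩
  rw [sum_boole, hIcc, natCast_card_Icc]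

lemma natCast_card_superset_downsetSupport {N : Finset α} {𝒰 : Finset (Finset α)}
    (h𝒰 : 𝒰 ⊆ N.powerset) (c : Finset α) :
    (#{w ∈ downsetSupport N 𝒰 | c ⊆ w} : ZMod 2) = if c ∈ 𝒰 then 1 else 0 := by
  rw [← sum_Icc_downsetSum h𝒰, ← natCast_card_filter_ne_zero, downsetSupport, filter_filter]
  congr 2
  ext w
  simp only [mem_filter, mem_powerset, mem_Icc]
  tauto

lemma sum_Icc_natCast_card_filter_union_subset (S : Finset (Finset α)) (a A u : Finset α) :
    ∑ c ∈ Icc a A, (#{w ∈ S | c ∪ u ⊆ w} : ZMod 2) = #{w ∈ S | w ∩ A = a ∧ u ⊆ w} := by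
  simp only [← sum_boole, sum_comm (s := Icc a A)]
  refine sum_congr rfl fun w _ => ?_
  have : {c ∈ Icc a A | c ∪ u ⊆ w} = {c ∈ Icc a (w ∩ A) | u ⊆ w} := by
    ext c
    simp only [mem_filter, mem_Icc, union_subset_iff, subset_inter_iff]
    tauto
  rw [sum_boole, this, filter_const]
  by_cases hu : u ⊆ w
  · simp only [hu, if_true, and_true, natCast_card_Icc, eq_comm]
  · simp [hu]

lemma natCast_card_fiber_downsetSupport {N : Finset α} {𝒰 : Finset (Finset α)}
    (h𝒰 : 𝒰 ⊆ N.powerset) (a A u : Finset α) :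
    (#{w ∈ downsetSupport N 𝒰 | w ∩ A = a ∧ u ⊆ w} : ZMod 2) = #{c ∈ Icc a A | c ∪ u ∈ 𝒰} := by
  rw [← sum_Icc_natCast_card_filter_union_subset, ← sum_boole]
  exact sum_congr rfl fun c _ => natCast_card_superset_downsetSupport h𝒰 _

lemma even_card_downsetSupport {N : Finset α} {𝒰 : Finset (Finset α)}
    (h𝒰 : 𝒰 ⊆ N.powerset) (hempty : ∅ ∉ 𝒰) :
    Even #(downsetSupport N 𝒰) := by
  have h := natCast_card_superset_downsetSupport h𝒰 ∅
  rw [filter_true_of_mem fun w _ => empty_subset w, if_neg hempty] at h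
  exact ZMod.natCast_eq_zero_iff_even.1 h

end DownsetSum

section OddFibers

variable {ι κ : Type*} [DecidableEq κ] {S : Finset ι} {I : Finset κ} {f : ι → κ}

lemma card_le_card_of_odd_card_fiber (hf : ∀ w ∈ S, f w ∈ I)
    (hodd : ∀ a ∈ I, Odd #{w ∈ S | f w = a}) : #I ≤ #S := by
  rw [card_eq_sum_card_fiberwise hf, card_eq_sum_ones]
  exact sum_le_sum fun a ha => (hodd a ha).pos

lemma card_fiber_add_three_mul_card_le (hf : ∀ w ∈ S, f w ∈ I)
    (hodd : ∀ a ∈ I, Odd #{w ∈ S | f w = a}) {b : κ} (hb : b ∈ I) :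
    #{w ∈ S | f w = b} + 3 * #I ≤ #S + 2 * #{a ∈ I | #{w ∈ S | f w = a} = 1} + 3 := by
  have hthree : ∀ a ∈ I.erase b,
      3 ≤ #{w ∈ S | f w = a} + 2 * if #{w ∈ S | f w = a} = 1 then 1 else 0 := by
    intro a ha
    obtain ⟨r, hr⟩ := hodd a (mem_of_mem_erase ha)
    split_ifs <;> omega
  have hsum := card_nsmul_le_sum _ _ _ hthree
  rw [sum_add_distrib, ← mul_sum, sum_boole, Nat.cast_id, smul_eq_mul,
    card_erase_of_mem hb] at hsum
  have hpure :
      #{a ∈ I.erase b | #{w ∈ S | f w = a} = 1} ≤ #{a ∈ I | #{w ∈ S | f w = a} = 1} :=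
    card_le_card (filter_subset_filter _ (erase_subset b I))
  have hI : 0 < #I := card_pos.2 ⟨b, hb⟩
  rw [card_eq_sum_card_fiberwise hf, ← add_sum_erase I _ hb]
  omega

end OddFibers

section MergedPair

variable {α : Type*} [DecidableEq α] {N A B : Finset α} {𝒯 : Finset (Finset α)}

lemma odd_card_fiber_downsetSupport (h𝒰 : insert A (insert B 𝒯) ⊆ N.powerset)
    (hAB : Disjoint A B) (hB : B.Nonempty) (h𝒯 : ∀ t ∈ 𝒯, #A < #t) {a : Finset α}
    (ha : a ⊆ A) : Odd #{w ∈ downsetSupport N (insert A (insert B 𝒯)) | w ∩ A = a} := by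
  have hIcc : {c ∈ Icc a A | c ∪ ∅ ∈ insert A (insert B 𝒯)} = {A} := by
    ext c
    simp only [mem_filter, mem_Icc, union_empty, mem_insert, mem_singleton]
    constructor
    · rintro ⟨⟨-, hcA⟩, rfl | rfl | hc⟩
      · rfl
      · exact absurd (disjoint_self_iff_empty _ |>.1 (hAB.mono_left hcA)) hB.ne_empty
      · exact absurd (card_le_card hcA) (h𝒯 c hc).not_ge
    · rintro rfl
      exact ⟨⟨ha, subset_rfl⟩, Or.inl rfl⟩
  have h := natCast_card_fiber_downsetSupport h𝒰 a A ∅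
  rw [hIcc, card_singleton, Nat.cast_one] at h
  simpa using ZMod.natCast_eq_one_iff_odd.1 h

lemma inter_eq_filter_of_fiber_downsetSupport_eq_singleton
    (h𝒰 : insert A (insert B 𝒯) ⊆ N.powerset) (hAB : Disjoint A B) (hB : 1 < #B)
    (h𝒯 : ∀ t ∈ 𝒯, #A < #t) {a w : Finset α} (ha : a ⊆ A)
    (hw : {w' ∈ downsetSupport N (insert A (insert B 𝒯)) | w' ∩ A = a} = {w}) :
    w ∩ B = {y ∈ B | insert y A ∈ 𝒯} := by
  ext y
  simp only [mem_inter, mem_filter, and_comm (a := y ∈ B), and_congr_left_iff]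
  intro hy
  have hyA : y ∉ A := disjoint_right.1 hAB hy
  have hIcc : {c ∈ Icc a A | c ∪ {y} ∈ insert A (insert B 𝒯)} =
      ({A} : Finset (Finset α)).filter (fun _ => insert y A ∈ 𝒯) := by
    ext c
    simp only [mem_filter, mem_Icc, union_singleton, mem_insert, mem_singleton]
    constructor
    · rintro ⟨⟨-, hcA⟩, hc | hc | hc⟩
      · exact absurd (hc ▸ mem_insert_self y c) hyA
      · have hc0 : c = ∅ :=
          (disjoint_self_iff_empty c).1 (hAB.mono hcA (hc ▸ subset_insert y c))
        subst hc0
        rw [← hc] at hB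
        simp at hB
      · have hcard : #A < #c + 1 := (h𝒯 _ hc).trans_le (card_insert_le y c)
        obtain rfl := eq_of_subset_of_card_le hcA (by omega)
        exact ⟨rfl, hc⟩
    · rintro ⟨rfl, hT⟩
      exact ⟨⟨ha, subset_rfl⟩, Or.inr (Or.inr hT)⟩
  have h := natCast_card_fiber_downsetSupport h𝒰 a A {y}
  rw [hIcc, ← filter_filter, hw, filter_singleton] at h
  by_cases hyw : y ∈ w <;> by_cases hyT : insert y A ∈ 𝒯 <;> simp_all

lemma card_filter_card_fiber_eq_one_le (h𝒰 : insert A (insert B 𝒯) ⊆ N.powerset)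
    (hAB : Disjoint A B) (hB : 1 < #B) (h𝒯 : ∀ t ∈ 𝒯, #A < #t) :
    #{a ∈ A.powerset | #{w ∈ downsetSupport N (insert A (insert B 𝒯)) | w ∩ A = a} = 1} ≤
      #{w ∈ downsetSupport N (insert A (insert B 𝒯)) | w ∩ B = {y ∈ B | insert y A ∈ 𝒯}} := by
  refine (card_le_card fun a ha => ?_).trans (card_image_le (f := (· ∩ A)))
  obtain ⟨haA, hfib⟩ := mem_filter.1 ha
  obtain ⟨w, hw⟩ := card_eq_one.1 hfib
  obtain ⟨hwS, rfl⟩ := mem_filter.1 (hw ▸ mem_singleton_self w)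
  exact mem_image.2 ⟨w, mem_filter.2 ⟨hwS, inter_eq_filter_of_fiber_downsetSupport_eq_singleton
    h𝒰 hAB hB h𝒯 (mem_powerset.1 haA) hw⟩, rfl⟩

lemma card_downsetSupport_pair_le (hAB : Disjoint A B) (hne : A ≠ B) :
    #(downsetSupport N {A, B}) ≤ 2 ^ #A + 2 ^ #B - 2 := by
  have hsub : downsetSupport N {A, B} ⊆ (A.powerset ∪ B.powerset).erase ∅ := by
    intro w hw
    replace hw := (mem_filter.1 hw).2
    rw [downsetSum, sum_pair hne] at hw
    simp only [mem_erase, mem_union, mem_powerset]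
    by_cases hwA : w ⊆ A <;> by_cases hwB : w ⊆ B
    · exact absurd hw (by simp [hwA, hwB]; decide)
    · exact ⟨by rintro rfl; exact hwB (empty_subset B), Or.inl hwA⟩
    · exact ⟨by rintro rfl; exact hwA (empty_subset A), Or.inr hwB⟩
    · exact absurd hw (by simp [hwA, hwB])
  have hinter : A.powerset ∩ B.powerset = {∅} := by
    ext w
    simp only [mem_inter, mem_powerset, ← subset_inter_iff, disjoint_iff_inter_eq_empty.1 hAB,
      subset_empty, mem_singleton]
  have hunion := card_union_add_card_inter A.powerset B.powerset
  rw [hinter, card_singleton, card_powerset, card_powerset] at hunion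
  have := card_le_card hsub
  rw [card_erase_of_mem (mem_union_left _ (empty_mem_powerset A))] at this
  omega

lemma card_filter_card_fiber_eq_one_add_three_mul_le {ℓ : ℕ}
    (h𝒰 : insert A (insert B 𝒯) ⊆ N.powerset) (hAB : Disjoint A B) (hA : #A = ℓ) (hB : #B = ℓ)
    (hℓ : 2 ≤ ℓ) (h𝒯 : ∀ t ∈ 𝒯, ℓ < #t) :
    #{b ∈ B.powerset | #{w ∈ downsetSupport N (insert A (insert B 𝒯)) | w ∩ B = b} = 1} +
        3 * 2 ^ ℓ ≤
      #(downsetSupport N (insert A (insert B 𝒯))) +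
        2 * #{a ∈ A.powerset | #{w ∈ downsetSupport N (insert A (insert B 𝒯)) | w ∩ A = a} = 1} +
          3 := by
  have hpure := card_filter_card_fiber_eq_one_le (insert_comm A B 𝒯 ▸ h𝒰) hAB.symm (by omega)
    (hB ▸ h𝒯)
  rw [insert_comm] at hpure
  have hcount := card_fiber_add_three_mul_card_le
    (fun w _ => mem_powerset.2 (inter_subset_right (s₁ := w) (s₂ := A)))
    (fun a ha => odd_card_fiber_downsetSupport h𝒰 hAB (card_pos.1 (by omega)) (hA ▸ h𝒯)
      (mem_powerset.1 ha))
    (mem_powerset.2 (filter_subset (fun x => insert x B ∈ 𝒯) A))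
  rw [card_powerset, hA] at hcount
  omega

theorem two_pow_succ_sub_two_le_card_downsetSupport {ℓ : ℕ}
    (h𝒰 : insert A (insert B 𝒯) ⊆ N.powerset) (hAB : Disjoint A B) (hA : #A = ℓ) (hB : #B = ℓ)
    (hℓ : 1 ≤ ℓ) (h𝒯 : ∀ t ∈ 𝒯, ℓ < #t) :
    2 ^ (ℓ + 1) - 2 ≤ #(downsetSupport N (insert A (insert B 𝒯))) := by
  have hBne : B.Nonempty := card_pos.1 (by omega)
  have hpow : 2 ^ (ℓ + 1) = 2 * 2 ^ ℓ := pow_succ' 2 ℓ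
  obtain rfl | hℓ2 := eq_or_lt_of_le hℓ
  · have := card_le_card_of_odd_card_fiber (fun w _ => mem_powerset.2 inter_subset_right)
      fun a ha => odd_card_fiber_downsetSupport h𝒰 hAB hBne (hA ▸ h𝒯) (mem_powerset.1 ha)
    rw [card_powerset, hA] at this
    omega
  have hempty : ∅ ∉ insert A (insert B 𝒯) := by
    simp only [mem_insert, not_or]
    exact ⟨(card_pos.1 (by omega)).ne_empty.symm, hBne.ne_empty.symm,
      fun h => by simpa using h𝒯 ∅ h⟩
  obtain ⟨r, hr⟩ := even_card_downsetSupport h𝒰 hempty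
  have hAB' := card_filter_card_fiber_eq_one_add_three_mul_le h𝒰 hAB hA hB hℓ2 h𝒯
  have hBA' := card_filter_card_fiber_eq_one_add_three_mul_le (insert_comm A B 𝒯 ▸ h𝒰) hAB.symm
    hB hA hℓ2 h𝒯
  rw [insert_comm] at hBA'
  set S := downsetSupport N (insert A (insert B 𝒯))
  have hkA : #{a ∈ A.powerset | #{w ∈ S | w ∩ A = a} = 1} ≤ 2 ^ ℓ :=
    hA ▸ (card_filter_le _ _).trans_eq (card_powerset A)
  have hkB : #{b ∈ B.powerset | #{w ∈ S | w ∩ B = b} = 1} ≤ 2 ^ ℓ :=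
    hB ▸ (card_filter_le _ _).trans_eq (card_powerset B)
  omega

end MergedPair

lemma hammingWeight_sum_row (n : ℕ) (T : Finset (Fin (2 ^ n))) :
    hammingWeight (∑ t ∈ T, row n t) =
      #(downsetSupport (range n) (T.image fun t : Fin (2 ^ n) => equivBitIndices t)) := by
  have hinj : Set.InjOn (fun t : Fin (2 ^ n) => equivBitIndices t) T :=
    (equivBitIndices.injective.comp Fin.val_injective).injOn
  have hsum : ∀ c, (∑ t ∈ T, row n t) c =
      downsetSum (T.image fun t : Fin (2 ^ n) => equivBitIndices t) (equivBitIndices c) := by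
    intro c
    rw [Finset.sum_apply, downsetSum, sum_image hinj]
    exact sum_congr rfl fun t _ => polarG_apply n t c
  refine card_bij (fun c _ => equivBitIndices c) (fun c hc => ?_)
    (fun c _ d _ h => Fin.ext (equivBitIndices.injective h)) (fun w hw => ?_)
  · rw [mem_filter, hsum] at hc
    exact mem_filter.2 ⟨mem_powerset.2 (equivBitIndices_subset_range_iff.2 c.isLt), hc.2⟩
  · obtain ⟨hwN, hw⟩ := mem_filter.1 hw
    rw [mem_powerset, ← equivBitIndices.apply_symm_apply w,
      equivBitIndices_subset_range_iff] at hwN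
    refine ⟨⟨equivBitIndices.symm w, hwN⟩, mem_filter.2 ⟨mem_univ _, ?_⟩,
      equivBitIndices.apply_symm_apply w⟩
    rw [hsum]
    simpa using hw

lemma hammingWeight_row_add_row_add_sum {n : ℕ} {i j : Fin (2 ^ n)} {T : Finset (Fin (2 ^ n))}
    (hij : i ≠ j) (hiT : i ∉ T) (hjT : j ∉ T) :
    hammingWeight (row n i + row n j + ∑ t ∈ T, row n t) =
      #(downsetSupport (range n) (insert (equivBitIndices i) (insert (equivBitIndices j)
        (T.image fun t : Fin (2 ^ n) => equivBitIndices t)))) := by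
  rw [add_assoc, ← sum_insert hjT, ← sum_insert (by simp [hij, hiT]), hammingWeight_sum_row,
    image_insert, image_insert]

lemma two_pow_succ_sub_two_le_hammingWeight {n ℓ : ℕ} (hℓ : 1 ≤ ℓ) {i j : Fin (2 ^ n)}
    (hij : i ≠ j) (hi : popcount i = ℓ) (hj : popcount j = ℓ) (hand : (i : ℕ) &&& j = 0)
    {T : Finset (Fin (2 ^ n))} (hT : ∀ t ∈ T, ℓ + 1 ≤ popcount t) :
    2 ^ (ℓ + 1) - 2 ≤ hammingWeight (row n i + row n j + ∑ t ∈ T, row n t) := by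
  rw [hammingWeight_row_add_row_add_sum hij (fun h => by have := hT i h; omega)
    (fun h => by have := hT j h; omega)]
  have hrange : ∀ t : Fin (2 ^ n), equivBitIndices t ∈ (range n).powerset := fun t =>
    mem_powerset.2 (equivBitIndices_subset_range_iff.2 t.isLt)
  refine two_pow_succ_sub_two_le_card_downsetSupport ?_ (disjoint_equivBitIndices_iff.2 hand)
    (popcount_eq_card_equivBitIndices i ▸ hi) (popcount_eq_card_equivBitIndices j ▸ hj) hℓ ?_
  · simp only [insert_subset_iff, image_subset_iff, hrange, implies_true, and_self]
  · simp only [mem_image, forall_exists_index, and_imp, forall_apply_eq_imp_iff₂,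
      ← popcount_eq_card_equivBitIndices]
    exact fun t ht => hT t ht

lemma hammingWeight_row_add_row_le {n : ℕ} {i j : Fin (2 ^ n)} (hij : i ≠ j)
    (hand : (i : ℕ) &&& j = 0) :
    hammingWeight (row n i + row n j) ≤ 2 ^ popcount i + 2 ^ popcount j - 2 := by
  have h := hammingWeight_row_add_row_add_sum hij (notMem_empty i) (notMem_empty j)
  rw [sum_empty, add_zero, image_empty, insert_empty] at h
  rw [h, popcount_eq_card_equivBitIndices, popcount_eq_card_equivBitIndices]
  exact card_downsetSupport_pair_le (disjoint_equivBitIndices_iff.2 hand)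
    fun h => hij (Fin.ext (equivBitIndices.injective h))

/-- for a disjoint-support pair `(i, j)` of common popcount `ℓ ≥ 1`,
adding any rows of popcount at least `ℓ+1` cannot decrease the Hamming weight below
`i₁(g_i + g_j) = 2^(ℓ+1) - 2`. -/
theorem merged_pair_weight_lower_bound_disjoint (n ℓ : ℕ) (hℓ : 1 ≤ ℓ)
    (i j : Fin (2 ^ n)) (hij : i ≠ j)
    (hi : popcount (i : ℕ) = ℓ) (hj : popcount (j : ℕ) = ℓ)
    (hand : (i : ℕ) &&& (j : ℕ) = 0)
    (T : Finset (Fin (2 ^ n))) (hT : ∀ t ∈ T, ℓ + 1 ≤ popcount (t : ℕ)) :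
    hammingWeight (row n i + row n j) ≤
        hammingWeight (row n i + row n j + ∑ t ∈ T, row n t) ∧
      hammingWeight (row n i + row n j) = 2 ^ (ℓ + 1) - 2 := by
  have hpair := hammingWeight_row_add_row_le hij hand
  have hlower := two_pow_succ_sub_two_le_hammingWeight hℓ hij hi hj hand hT
  have hpair_lower :=
    two_pow_succ_sub_two_le_hammingWeight hℓ hij hi hj hand (T := ∅) (by simp)
  rw [sum_empty, add_zero] at hpair_lower
  rw [hi, hj] at hpair
  have hpow : 2 ^ (ℓ + 1) = 2 ^ ℓ + 2 ^ ℓ := by ring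
  omega
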